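/- arXiv:2006.11723 — 3 statements merged into one kernel-verified Lean document; each statement's English description precedes it below -/
import Mathlib

section
/- Let B* be a stably oriented bivariant theory on an admissible functoriality, X an object, and f₁ : V₁ → X, f₂ : V₂ → X morphisms that are both confined and specialized. Then f₁!(1_{V₁}) • f₂!(1_{V₂}) = f₁₂!(1_{V₁ ×_X V₂}), where f₁₂ : V₁ ×_X V₂ → X is the induced map from the fibre product. -/
open CategoryTheory CategoryTheory.Limits

universe v u

/-- A Fulton–MacPherson functoriality: classes of confined and specialized morphisms
(all Cartesian squares are independent). -/
structure Functoriality (C : Type u) [Category.{v} C] where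
  Confined : MorphismProperty C
  Specialized : MorphismProperty C
  confined_id : ∀ X : C, Confined (𝟙 X)
  confined_comp : ∀ {X Y Z : C} {f : X ⟶ Y} {g : Y ⟶ Z},
    Confined f → Confined g → Confined (f ≫ g)
  confined_pull : ∀ {P X Q Y : C} {l : P ⟶ X} {t : P ⟶ Q} {b : X ⟶ Y} {r : Q ⟶ Y},
    IsPullback l t b r → Confined b → Confined t
  specialized_id : ∀ X : C, Specialized (𝟙 X)
  specialized_comp : ∀ {X Y Z : C} {f : X ⟶ Y} {g : Y ⟶ Z},
    Specialized f → Specialized g → Specialized (f ≫ g)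
  specialized_pull : ∀ {P X Q Y : C} {l : P ⟶ X} {t : P ⟶ Q} {b : X ⟶ Y} {r : Q ⟶ Y},
    IsPullback l t b r → Specialized b → Specialized t

/-- The underlying data of a bivariant theory: groups `B (X ⟶ Y)`, bivariant product,
units, pushforwards along confined morphisms and pullbacks along (independent) Cartesian
squares.  In a square `IsPullback l t b r`, `pull` sends classes of the bottom morphism
`b` to classes of the pulled-back (top) morphism `t`. -/
structure BivariantData {C : Type u} [Category.{v} C] (F : Functoriality C) where
  B : ∀ {X Y : C}, (X ⟶ Y) → Type
  instAdd : ∀ {X Y : C} (f : X ⟶ Y), AddCommGroup (B f)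
  prod : ∀ {X Y Z : C} {f : X ⟶ Y} {g : Y ⟶ Z}, B f → B g → B (f ≫ g)
  one : ∀ X : C, B (𝟙 X)
  push : ∀ {X X' Y : C} (i : X ⟶ X'), F.Confined i → ∀ h : X' ⟶ Y, B (i ≫ h) → B h
  pull : ∀ {P X Q Y : C} {l : P ⟶ X} {t : P ⟶ Q} {b : X ⟶ Y} {r : Q ⟶ Y},
    IsPullback l t b r → B b → B t

attribute [instance] BivariantData.instAdd

/-- A bivariant theory in the sense of Fulton–MacPherson: the data above together with
the axioms (A₁), (A₂), (A₃), (A₁₂), (A₁₃), (A₂₃), (A₁₂₃) and the unit axiom (U). -/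
structure BivariantTheory {C : Type u} [Category.{v} C] (F : Functoriality C) extends
    BivariantData F where
  prod_add_left : ∀ {X Y Z : C} {f : X ⟶ Y} {g : Y ⟶ Z} (a b : B f) (c : B g),
    prod (a + b) c = prod a c + prod b c
  prod_add_right : ∀ {X Y Z : C} {f : X ⟶ Y} {g : Y ⟶ Z} (a : B f) (b c : B g),
    prod a (b + c) = prod a b + prod a c
  /-- (A₁) associativity of the bivariant product. -/
  prod_assoc : ∀ {X Y Z W : C} {f : X ⟶ Y} {g : Y ⟶ Z} {h : Z ⟶ W}
    (a : B f) (b : B g) (c : B h),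
    prod (prod a b) c = cast (by rw [Category.assoc]) (prod a (prod b c))
  /-- (U) left unit. -/
  one_prod : ∀ {X Y : C} {f : X ⟶ Y} (a : B f),
    prod (one X) a = cast (by rw [Category.id_comp]) a
  /-- (U) right unit. -/
  prod_one : ∀ {X Y : C} {f : X ⟶ Y} (a : B f),
    prod a (one Y) = cast (by rw [Category.comp_id]) a
  push_add : ∀ {X X' Y : C} (i : X ⟶ X') (hi : F.Confined i) (h : X' ⟶ Y)
    (a b : B (i ≫ h)), push i hi h (a + b) = push i hi h a + push i hi h b
  /-- (A₂) functoriality of pushforward. -/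
  push_comp : ∀ {X X' X'' Y : C} (i : X ⟶ X') (hi : F.Confined i) (j : X' ⟶ X'')
    (hj : F.Confined j) (h : X'' ⟶ Y) (a : B (i ≫ (j ≫ h))),
    push j hj h (push i hi (j ≫ h) a) =
      push (i ≫ j) (F.confined_comp hi hj) h (cast (by rw [Category.assoc]) a)
  pull_add : ∀ {P X Q Y : C} {l : P ⟶ X} {t : P ⟶ Q} {b : X ⟶ Y} {r : Q ⟶ Y}
    (sq : IsPullback l t b r) (a b' : B b), pull sq (a + b') = pull sq a + pull sq b'
  /-- pullback along the identity square is the identity. -/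
  pull_id : ∀ {X Y : C} {b : X ⟶ Y} (sq : IsPullback (𝟙 X) b b (𝟙 Y)) (a : B b),
    pull sq a = a
  /-- (A₃) functoriality of pullback. -/
  pull_comp : ∀ {P₁ X Q₁ Y P₂ Q₂ : C} {l₁ : P₁ ⟶ X} {t₁ : P₁ ⟶ Q₁} {b : X ⟶ Y}
    {r₁ : Q₁ ⟶ Y} {l₂ : P₂ ⟶ P₁} {t₂ : P₂ ⟶ Q₂} {r₂ : Q₂ ⟶ Q₁}
    (sq₁ : IsPullback l₁ t₁ b r₁) (sq₂ : IsPullback l₂ t₂ t₁ r₂)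
    (sqO : IsPullback (l₂ ≫ l₁) t₂ b (r₂ ≫ r₁)) (a : B b),
    pull sq₂ (pull sq₁ a) = pull sqO a
  /-- pullback preserves units. -/
  pull_one : ∀ {X Q : C} {l : Q ⟶ X} (sq : IsPullback l (𝟙 Q) (𝟙 X) l),
    pull sq (one X) = one Q
  /-- (A₁₂) product and pushforward commute. -/
  A12 : ∀ {X X' Y Z : C} (i : X ⟶ X') (hi : F.Confined i) (h : X' ⟶ Y) (g : Y ⟶ Z)
    (a : B (i ≫ h)) (b : B g),
    push i hi (h ≫ g) (cast (by rw [Category.assoc]) (prod a b)) =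
      prod (push i hi h a) b
  /-- (A₁₃) pullback is multiplicative. -/
  A13 : ∀ {X Y Z X' Y' Z' : C} {b₁ : X ⟶ Y} {b₂ : Y ⟶ Z} {hX : X' ⟶ X} {hY : Y' ⟶ Y}
    {r : Z' ⟶ Z} {t₁ : X' ⟶ Y'} {t₂ : Y' ⟶ Z'}
    (sq₁ : IsPullback hX t₁ b₁ hY) (sq₂ : IsPullback hY t₂ b₂ r)
    (sqO : IsPullback hX (t₁ ≫ t₂) (b₁ ≫ b₂) r) (a : B b₁) (b : B b₂),
    pull sqO (prod a b) = prod (pull sq₁ a) (pull sq₂ b)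
  /-- (A₂₃) push-pull formula. -/
  A23 : ∀ {X Y Z X' Y' Z' : C} (f : X ⟶ Y) (hf : F.Confined f) (g : Y ⟶ Z)
    {r : Z' ⟶ Z} {tX : X' ⟶ Z'} {tY : Y' ⟶ Z'} {hX : X' ⟶ X} {hY : Y' ⟶ Y}
    (f' : X' ⟶ Y') (hf' : F.Confined f')
    (sqO : IsPullback hX tX (f ≫ g) r) (sqY : IsPullback hY tY g r)
    (e : f' ≫ tY = tX) (a : B (f ≫ g)),
    pull sqY (push f hf g a) = push f' hf' tY (cast (by rw [e]) (pull sqO a))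
  /-- (A₁₂₃) projection formula. -/
  A123 : ∀ {P X Q Y Z : C} {l : P ⟶ X} {t : P ⟶ Q} {b : X ⟶ Y} {r : Q ⟶ Y}
    (sq : IsPullback l t b r) (hl : F.Confined l) (hr : F.Confined r) (k : Y ⟶ Z)
    (a : B (r ≫ k)) (β : B b) (e : t ≫ (r ≫ k) = l ≫ (b ≫ k)),
    push l hl (b ≫ k) (cast (by rw [e]) (prod (pull sq β) a)) =
      prod β (push r hr k a)

/-- A stable orientation on a bivariant theory: classes `θ(f)` for all specialized
morphisms, multiplicative, unital and stable under pullbacks. -/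
structure StableOrientation {C : Type u} [Category.{v} C] {F : Functoriality C}
    (T : BivariantTheory F) where
  θ : ∀ {X Y : C} (f : X ⟶ Y), F.Specialized f → T.B f
  θ_id : ∀ X : C, θ (𝟙 X) (F.specialized_id X) = T.one X
  θ_comp : ∀ {X Y Z : C} (f : X ⟶ Y) (g : Y ⟶ Z) (hf : F.Specialized f)
    (hg : F.Specialized g),
    θ (f ≫ g) (F.specialized_comp hf hg) = T.prod (θ f hf) (θ g hg)
  θ_pull : ∀ {P X Q Y : C} {l : P ⟶ X} {t : P ⟶ Q} {b : X ⟶ Y} {r : Q ⟶ Y}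
    (sq : IsPullback l t b r) (hb : F.Specialized b),
    T.pull sq (θ b hb) = θ t (F.specialized_pull sq hb)

variable {C : Type u} [Category.{v} C] {F : Functoriality C}

/-- Left action of a coefficient class `r ∈ B(pt → pt)` on `B(X → Y)`:
`r · α := π_X^*(r) • α`. -/
def BivariantTheory.lAct (T : BivariantTheory F) {pt : C} {π : ∀ X : C, X ⟶ pt}
    (sq : ∀ X : C, IsPullback (π X) (𝟙 X) (𝟙 pt) (π X)) (r : T.B (𝟙 pt))
    {X Y : C} {f : X ⟶ Y} (α : T.B f) : T.B f :=
  cast (by rw [Category.id_comp]) (T.prod (T.pull (sq X) r) α)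

/-- Right action of a coefficient class `r ∈ B(pt → pt)` on `B(X → Y)`:
`α · r := α • π_Y^*(r)`. -/
def BivariantTheory.rAct (T : BivariantTheory F) {pt : C} {π : ∀ X : C, X ⟶ pt}
    (sq : ∀ X : C, IsPullback (π X) (𝟙 X) (𝟙 pt) (π X))
    {X Y : C} {f : X ⟶ Y} (α : T.B f) (r : T.B (𝟙 pt)) : T.B f :=
  cast (by rw [Category.comp_id]) (T.prod α (T.pull (sq Y) r))

/-- The cup product on the associated cohomology ring `B^*(X) = B(X →^{id} X)`. -/
def BivariantTheory.cprod (T : BivariantTheory F) {X : C} (a b : T.B (𝟙 X)) :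
    T.B (𝟙 X) :=
  cast (by rw [Category.id_comp]) (T.prod a b)

/-- Powers in the associated cohomology ring. -/
def BivariantTheory.cpow (T : BivariantTheory F) {X : C} (a : T.B (𝟙 X)) :
    ℕ → T.B (𝟙 X)
  | 0 => T.one X
  | n + 1 => T.cprod a (T.cpow a n)

/-- The Gysin pushforward `f_!(1) = f_*(θ(f))` of the unit along a confined and
specialized morphism. -/
def BivariantTheory.gysinOne (T : BivariantTheory F) (O : StableOrientation T)
    {V X : C} (f : V ⟶ X) (hc : F.Confined f) (hs : F.Specialized f) : T.B (𝟙 X) :=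
  T.push f hc (𝟙 X) (cast (by rw [Category.comp_id]) (O.θ f hs))

/-- The first Chern class `c₁(L) = s₀^* s₀_!(1)` of a line bundle with total space `L`
and zero section `s₀`. -/
def BivariantTheory.c1 (T : BivariantTheory F) (O : StableOrientation T)
    {X L : C} (s₀ : X ⟶ L) (hc : F.Confined s₀) (hs : F.Specialized s₀)
    (sq : IsPullback s₀ (𝟙 X) (𝟙 L) s₀) : T.B (𝟙 X) :=
  T.pull sq (T.gysinOne O s₀ hc hs)

section Helpers

variable (T : BivariantTheory F)

lemma BivariantTheory.heq_prod {X Y Z : C} {f f' : X ⟶ Y} {g g' : Y ⟶ Z}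
    (hf : f = f') (hg : g = g') {a : T.B f} {a' : T.B f'} {b : T.B g} {b' : T.B g'}
    (ha : HEq a a') (hb : HEq b b') : HEq (T.prod a b) (T.prod a' b') := by
  subst hf; subst hg; rw [eq_of_heq ha, eq_of_heq hb]

lemma BivariantTheory.heq_push {X X' Y : C} (i : X ⟶ X') (hi hi' : F.Confined i)
    {h h' : X' ⟶ Y} (hh : h = h') {a : T.B (i ≫ h)} {a' : T.B (i ≫ h')}
    (ha : HEq a a') : HEq (T.push i hi h a) (T.push i hi' h' a') := by
  subst hh; rw [eq_of_heq ha]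

lemma StableOrientation.heq_θ {T : BivariantTheory F} (O : StableOrientation T)
    {X Y : C} {f f' : X ⟶ Y} (h : f = f') (hs : F.Specialized f)
    (hs' : F.Specialized f') : HEq (O.θ f hs) (O.θ f' hs') := by
  subst h; rfl

end Helpers

/-- Let `B*` be a stably oriented bivariant theory on an admissible
functoriality, `X` an object, and `f₁ : V₁ ⟶ X`, `f₂ : V₂ ⟶ X` both confined and
specialized.  Then `f₁_!(1_{V₁}) • f₂_!(1_{V₂}) = f₁₂_!(1_{V₁ ×_X V₂})`, where
`f₁₂ : V₁ ×_X V₂ ⟶ X` is the induced map from the fibre product. -/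
theorem gysin_pushforward_intersection_product
    {C : Type u} [Category.{v} C] {F : Functoriality C}
    (T : BivariantTheory F) (O : StableOrientation T)
    {X V₁ V₂ P : C} (f₁ : V₁ ⟶ X) (f₂ : V₂ ⟶ X)
    (hc₁ : F.Confined f₁) (hs₁ : F.Specialized f₁)
    (hc₂ : F.Confined f₂) (hs₂ : F.Specialized f₂)
    -- `P = V₁ ×_X V₂` with its two projections:
    (pr₁ : P ⟶ V₁) (pr₂ : P ⟶ V₂) (sq : IsPullback pr₁ pr₂ f₁ f₂)
    (hc₁₂ : F.Confined (pr₁ ≫ f₁)) (hs₁₂ : F.Specialized (pr₁ ≫ f₁)) :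
    T.cprod (T.gysinOne O f₁ hc₁ hs₁) (T.gysinOne O f₂ hc₂ hs₂)
      = T.gysinOne O (pr₁ ≫ f₁) hc₁₂ hs₁₂ := by
  have hcpr₁ : F.Confined pr₁ := F.confined_pull sq.flip hc₂
  have hspr₂ : F.Specialized pr₂ := F.specialized_pull sq hs₁
  have e : pr₂ ≫ (f₂ ≫ 𝟙 X) = pr₁ ≫ (f₁ ≫ 𝟙 X) := by simp [sq.w]
  have ec₁ : T.B f₁ = T.B (f₁ ≫ 𝟙 X) := by rw [Category.comp_id]
  have ec₂ : T.B f₂ = T.B (f₂ ≫ 𝟙 X) := by rw [Category.comp_id]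
  have easc : T.B ((f₁ ≫ 𝟙 X) ≫ 𝟙 X) = T.B (f₁ ≫ 𝟙 X ≫ 𝟙 X) := by
    rw [Category.assoc]
  have ee : T.B (pr₂ ≫ f₂ ≫ 𝟙 X) = T.B (pr₁ ≫ f₁ ≫ 𝟙 X) := by rw [e]
  have e12 : T.B (pr₁ ≫ f₁ ≫ 𝟙 X) = T.B ((pr₁ ≫ f₁) ≫ 𝟙 X) := by
    rw [Category.assoc]
  have ei : T.B (pr₁ ≫ f₁) = T.B ((pr₁ ≫ f₁) ≫ 𝟙 X) := by rw [Category.comp_id]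
  have hA123 := T.A123 sq hcpr₁ hc₂ (𝟙 X) (cast ec₂ (O.θ f₂ hs₂)) (O.θ f₁ hs₁) e
  -- first argument transformation
  have harg1 : HEq
      (cast easc (T.prod (cast ec₁ (O.θ f₁ hs₁))
        (T.push f₂ hc₂ (𝟙 X) (cast ec₂ (O.θ f₂ hs₂)))))
      (T.push pr₁ hcpr₁ (f₁ ≫ 𝟙 X)
        (cast ee (T.prod (T.pull sq (O.θ f₁ hs₁)) (cast ec₂ (O.θ f₂ hs₂))))) := by
    refine HEq.trans (cast_heq _ _) ?_
    refine HEq.trans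
      (T.heq_prod (Category.comp_id f₁) rfl (cast_heq _ _) HEq.rfl) ?_
    exact heq_of_eq hA123.symm
  have harg2 : HEq
      (cast e12 (cast ee (T.prod (T.pull sq (O.θ f₁ hs₁)) (cast ec₂ (O.θ f₂ hs₂)))))
      (cast ei (O.θ (pr₁ ≫ f₁) hs₁₂)) := by
    refine HEq.trans (cast_heq _ _) (HEq.trans (cast_heq _ _) ?_)
    refine HEq.trans ?_ (cast_heq _ _).symm
    rw [O.θ_pull sq hs₁]
    refine HEq.trans
      (T.heq_prod rfl (Category.comp_id f₂) HEq.rfl (cast_heq _ _)) ?_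
    rw [← O.θ_comp pr₂ f₂ (F.specialized_pull sq hs₁) hs₂]
    exact O.heq_θ sq.w.symm _ hs₁₂
  apply eq_of_heq
  unfold BivariantTheory.cprod BivariantTheory.gysinOne
  refine HEq.trans (cast_heq _ _) ?_
  rw [← T.A12 f₁ hc₁ (𝟙 X) (𝟙 X)]
  refine HEq.trans (T.heq_push f₁ hc₁ hc₁ (Category.comp_id (𝟙 X)) harg1) ?_
  rw [T.push_comp pr₁ hcpr₁ f₁ hc₁ (𝟙 X)]
  exact T.heq_push (pr₁ ≫ f₁) (F.confined_comp hcpr₁ hc₁) hc₁₂ rfl harg2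
end

section
/- Let η : B₁* → B₂* be an orientation preserving Grothendieck transformation between stably oriented bivariant theories, where B₁* satisfies the section axiom and the formal group law axiom with formal group law F^{B₁} ∈ B₁*(pt)[[x,y]]. Then B₂* also satisfies the section and formal group law axioms, and its formal group law is F^{B₂}(x,y) = η(F^{B₁}(x,y)), which is moreover the unique power series F with c₁(L₁ ⊗ L₂) = F(c₁(L₁), c₁(L₂)) for all line bundles on all X. -/
open CategoryTheory CategoryTheory.Limits

universe v u

variable {C : Type u} [Category.{v} C] {F : Functoriality C}

/-- An abstract theory of line bundles on an admissible functoriality: each object `X`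
has a collection `LB X` of line bundles; each line bundle has a total space with a
confined, specialized zero section; line bundles can be tensored; and each line bundle
has a collection of global sections, each with a (derived) vanishing locus whose
inclusion is confined and specialized. -/
structure LineBundleTheory {C : Type u} [Category.{v} C] (F : Functoriality C) where
  LB : C → Type
  total : ∀ {X : C}, LB X → C
  zero : ∀ {X : C} (L : LB X), X ⟶ total L
  conf : ∀ {X : C} (L : LB X), F.Confined (zero L)
  spec : ∀ {X : C} (L : LB X), F.Specialized (zero L)
  sq : ∀ {X : C} (L : LB X), IsPullback (zero L) (𝟙 X) (𝟙 (total L)) (zero L)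
  tensor : ∀ {X : C}, LB X → LB X → LB X
  Sections : ∀ {X : C}, LB X → Type
  vloc : ∀ {X : C} {L : LB X}, Sections L → C
  vinc : ∀ {X : C} {L : LB X} (s : Sections L), vloc s ⟶ X
  vconf : ∀ {X : C} {L : LB X} (s : Sections L), F.Confined (vinc s)
  vspec : ∀ {X : C} {L : LB X} (s : Sections L), F.Specialized (vinc s)

variable {C : Type u} [Category.{v} C] {F : Functoriality C}

/-- The first Chern class of an abstract line bundle. -/
def BivariantTheory.c1L (T : BivariantTheory F) (O : StableOrientation T)
    (LBs : LineBundleTheory F) {X : C} (L : LBs.LB X) : T.B (𝟙 X) :=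
  T.c1 O (LBs.zero L) (LBs.conf L) (LBs.spec L) (LBs.sq L)

/-- `B*` satisfies the *section axiom*: for every line bundle and every global section
`s`, `c₁(L) = i_{s!}(1_{Z_s})`. -/
def SectionAxiom (T : BivariantTheory F) (O : StableOrientation T)
    (LBs : LineBundleTheory F) : Prop :=
  ∀ (X : C) (L : LBs.LB X) (s : LBs.Sections L),
    T.c1L O LBs L = T.gysinOne O (LBs.vinc s) (LBs.vconf s) (LBs.vspec s)

/-- All first Chern classes of line bundles are nilpotent. -/
def ChernNilpotent (T : BivariantTheory F) (O : StableOrientation T)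
    (LBs : LineBundleTheory F) : Prop :=
  ∀ (X : C) (L : LBs.LB X), ∃ N, T.cpow (T.c1L O LBs L) N = 0

/-- Truncated evaluation of a formal power series (given by its coefficient function
`Fc : ℕ → ℕ → B*(pt)`) at two cohomology classes `x, y ∈ B*(X)`; for `x, y` nilpotent
of order `< N` this is the honest evaluation `F(x, y)`. -/
def evalPS (T : BivariantTheory F) {pt : C} {π : ∀ X : C, X ⟶ pt}
    (sq : ∀ X : C, IsPullback (π X) (𝟙 X) (𝟙 pt) (π X))
    (Fc : ℕ → ℕ → T.B (𝟙 pt)) {X : C} (x y : T.B (𝟙 X)) (N : ℕ) : T.B (𝟙 X) :=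
  ∑ i ∈ Finset.range N, ∑ j ∈ Finset.range N,
    T.cprod (T.pull (sq X) (Fc i j)) (T.cprod (T.cpow x i) (T.cpow y j))

/-- The power series `Fc` governs Chern classes of tensor products:
`c₁(L₁ ⊗ L₂) = F(c₁(L₁), c₁(L₂))` for all line bundles on all `X`. -/
def ChernFormula (T : BivariantTheory F) (O : StableOrientation T)
    (LBs : LineBundleTheory F) {pt : C} {π : ∀ X : C, X ⟶ pt}
    (sq : ∀ X : C, IsPullback (π X) (𝟙 X) (𝟙 pt) (π X))
    (Fc : ℕ → ℕ → T.B (𝟙 pt)) : Prop :=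
  ∀ (X : C) (L₁ L₂ : LBs.LB X) (N : ℕ),
    T.cpow (T.c1L O LBs L₁) N = 0 → T.cpow (T.c1L O LBs L₂) N = 0 →
    T.c1L O LBs (LBs.tensor L₁ L₂)
      = evalPS T sq Fc (T.c1L O LBs L₁) (T.c1L O LBs L₂) N

/-- A Grothendieck transformation between two bivariant theories with the same
functoriality. -/
structure GrothTrans {C : Type u} [Category.{v} C] {F : Functoriality C}
    (T₁ T₂ : BivariantTheory F) where
  η : ∀ {X Y : C} (f : X ⟶ Y), T₁.B f → T₂.B f
  η_add : ∀ {X Y : C} (f : X ⟶ Y) (a b : T₁.B f), η f (a + b) = η f a + η f b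
  η_one : ∀ X : C, η (𝟙 X) (T₁.one X) = T₂.one X
  η_prod : ∀ {X Y Z : C} (f : X ⟶ Y) (g : Y ⟶ Z) (a : T₁.B f) (b : T₁.B g),
    η (f ≫ g) (T₁.prod a b) = T₂.prod (η f a) (η g b)
  η_push : ∀ {X X' Y : C} (i : X ⟶ X') (hi : F.Confined i) (h : X' ⟶ Y)
    (a : T₁.B (i ≫ h)), η h (T₁.push i hi h a) = T₂.push i hi h (η (i ≫ h) a)
  η_pull : ∀ {P X Q Y : C} {l : P ⟶ X} {t : P ⟶ Q} {b : X ⟶ Y} {r : Q ⟶ Y}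
    (sq : IsPullback l t b r) (a : T₁.B b), η t (T₁.pull sq a) = T₂.pull sq (η b a)


/-! A Grothendieck transformation commutes with products, pushforwards and pullbacks and
preserves the orientations, so it sends Gysin classes `f_!(1)` and first Chern classes of `B₁*`
to those of `B₂*`. Applying `η` to the section axiom, to the nilpotency of `c₁` and to the
formula `c₁(L₁ ⊗ L₂) = F(c₁(L₁), c₁(L₂))` therefore transports all three to `B₂*`, with
coefficients `η(F)`. -/

namespace BivariantTheory

variable (T : BivariantTheory F)

lemma cast_zero {X Y : C} {f g : X ⟶ Y} (h : f = g) (e : T.B f = T.B g) :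
    cast e (0 : T.B f) = 0 := by
  subst h
  rfl

lemma prod_zero {X Y Z : C} {f : X ⟶ Y} {g : Y ⟶ Z} (a : T.B f) :
    T.prod a (0 : T.B g) = 0 :=
  map_zero (AddMonoidHom.mk' (T.prod a) (T.prod_add_right a))

lemma zero_prod {X Y Z : C} {f : X ⟶ Y} {g : Y ⟶ Z} (b : T.B g) :
    T.prod (0 : T.B f) b = 0 :=
  map_zero (AddMonoidHom.mk' (T.prod · b) (T.prod_add_left · · b))

lemma cprod_zero {X : C} (a : T.B (𝟙 X)) : T.cprod a 0 = 0 := by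
  rw [cprod, prod_zero, cast_zero T (Category.id_comp _)]

lemma zero_cprod {X : C} (a : T.B (𝟙 X)) : T.cprod 0 a = 0 := by
  rw [cprod, zero_prod, cast_zero T (Category.id_comp _)]

lemma cprod_one {X : C} (a : T.B (𝟙 X)) : T.cprod a (T.one X) = a := by
  rw [cprod, prod_one, cast_cast, cast_eq]

lemma one_cprod {X : C} (a : T.B (𝟙 X)) : T.cprod (T.one X) a = a := by
  rw [cprod, one_prod, cast_cast, cast_eq]

lemma cpow_eq_zero_of_le {X : C} {x : T.B (𝟙 X)} {N n : ℕ} (hN : T.cpow x N = 0)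
    (hn : N ≤ n) : T.cpow x n = 0 := by
  induction n, hn using Nat.le_induction with
  | base => exact hN
  | succ n _ ih => rw [cpow, ih, cprod_zero]

variable {pt : C} {π : ∀ X : C, X ⟶ pt} (sq : ∀ X : C, IsPullback (π X) (𝟙 X) (𝟙 pt) (π X))

def psMonomial (c : T.B (𝟙 pt)) {X : C} (x y : T.B (𝟙 X)) (i j : ℕ) : T.B (𝟙 X) :=
  T.cprod (T.pull (sq X) c) (T.cprod (T.cpow x i) (T.cpow y j))

lemma psMonomial_eq_zero {c : T.B (𝟙 pt)} {X : C} {x y : T.B (𝟙 X)} {i j : ℕ}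
    (h : T.cprod (T.cpow x i) (T.cpow y j) = 0) : T.psMonomial sq c x y i j = 0 := by
  rw [psMonomial, h, cprod_zero]

lemma evalPS_eq_sum_product (Fc : ℕ → ℕ → T.B (𝟙 pt)) {X : C} (x y : T.B (𝟙 X)) (N : ℕ) :
    evalPS T sq Fc x y N =
      ∑ p ∈ Finset.range N ×ˢ Finset.range N, T.psMonomial sq (Fc p.1 p.2) x y p.1 p.2 := by
  rw [Finset.sum_product]
  rfl

lemma evalPS_eq_of_le (Fc : ℕ → ℕ → T.B (𝟙 pt)) {X : C} {x y : T.B (𝟙 X)} {N M : ℕ}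
    (hx : T.cpow x N = 0) (hy : T.cpow y N = 0) (hNM : N ≤ M) :
    evalPS T sq Fc x y M = evalPS T sq Fc x y N := by
  have hsub := Finset.range_subset_range.mpr hNM
  rw [evalPS_eq_sum_product, evalPS_eq_sum_product]
  refine (Finset.sum_subset (Finset.product_subset_product hsub hsub) fun p _ hp => ?_).symm
  apply psMonomial_eq_zero
  rcases le_or_gt N p.1 with h | h
  · rw [T.cpow_eq_zero_of_le hx h, zero_cprod]
  · have : N ≤ p.2 := by simp_all
    rw [T.cpow_eq_zero_of_le hy this, cprod_zero]

lemma evalPS_sub_evalPS {G H : ℕ → ℕ → T.B (𝟙 pt)} {X : C} {x y : T.B (𝟙 X)}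
    {i j N : ℕ} (hi : i < N) (hj : j < N)
    (hvan : ∀ a b, i < a ∨ j < b → T.cprod (T.cpow x a) (T.cpow y b) = 0)
    (hGH : ∀ a b, a + b < i + j → G a b = H a b) :
    evalPS T sq G x y N - evalPS T sq H x y N =
      T.psMonomial sq (G i j) x y i j - T.psMonomial sq (H i j) x y i j := by
  rw [evalPS_eq_sum_product, evalPS_eq_sum_product, ← Finset.sum_sub_distrib]
  refine Finset.sum_eq_single_of_mem (i, j) (by simp [hi, hj]) fun p _ hp => ?_
  by_cases hout : i < p.1 ∨ j < p.2
  · rw [psMonomial_eq_zero T sq (hvan _ _ hout), psMonomial_eq_zero T sq (hvan _ _ hout),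
      sub_self]
  · have hlt : p.1 + p.2 < i + j := by
      obtain ⟨a, b⟩ := p
      have : ¬(a = i ∧ b = j) := fun ⟨ha, hb⟩ => hp (by rw [ha, hb])
      simp only [not_or, not_lt] at hout
      omega
    rw [hGH _ _ hlt, sub_self]

end BivariantTheory

namespace GrothTrans

variable {T₁ T₂ : BivariantTheory F} (τ : GrothTrans T₁ T₂)

def PreservesOrientation (O₁ : StableOrientation T₁) (O₂ : StableOrientation T₂) : Prop :=
  ∀ (X Y : C) (f : X ⟶ Y) (hf : F.Specialized f), τ.η f (O₁.θ f hf) = O₂.θ f hf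

def addMonoidHom {X Y : C} (f : X ⟶ Y) : T₁.B f →+ T₂.B f :=
  AddMonoidHom.mk' (τ.η f) (τ.η_add f)

lemma η_zero {X Y : C} (f : X ⟶ Y) : τ.η f 0 = 0 :=
  map_zero (τ.addMonoidHom f)

lemma η_sum {X Y : C} (f : X ⟶ Y) {ι : Type*} (s : Finset ι) (g : ι → T₁.B f) :
    τ.η f (∑ i ∈ s, g i) = ∑ i ∈ s, τ.η f (g i) :=
  map_sum (τ.addMonoidHom f) g s

lemma η_cast {X Y : C} {f g : X ⟶ Y} (h : f = g) (e₁ : T₁.B f = T₁.B g)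
    (e₂ : T₂.B f = T₂.B g) (a : T₁.B f) : τ.η g (cast e₁ a) = cast e₂ (τ.η f a) := by
  subst h
  rfl

lemma η_cprod {X : C} (a b : T₁.B (𝟙 X)) :
    τ.η (𝟙 X) (T₁.cprod a b) = T₂.cprod (τ.η (𝟙 X) a) (τ.η (𝟙 X) b) := by
  rw [BivariantTheory.cprod, τ.η_cast (Category.id_comp _) _ (by rw [Category.id_comp]),
    τ.η_prod, BivariantTheory.cprod]

lemma η_cpow {X : C} (x : T₁.B (𝟙 X)) (n : ℕ) :
    τ.η (𝟙 X) (T₁.cpow x n) = T₂.cpow (τ.η (𝟙 X) x) n := by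
  induction n with
  | zero => exact τ.η_one X
  | succ n ih => rw [BivariantTheory.cpow, η_cprod, ih, BivariantTheory.cpow]

lemma η_evalPS {pt : C} {π : ∀ X : C, X ⟶ pt}
    (sq : ∀ X : C, IsPullback (π X) (𝟙 X) (𝟙 pt) (π X))
    (Fc : ℕ → ℕ → T₁.B (𝟙 pt)) {X : C} (x y : T₁.B (𝟙 X)) (N : ℕ) :
    τ.η (𝟙 X) (evalPS T₁ sq Fc x y N) =
      evalPS T₂ sq (fun i j => τ.η (𝟙 pt) (Fc i j)) (τ.η (𝟙 X) x) (τ.η (𝟙 X) y) N := by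
  simp only [evalPS, η_sum, η_cprod, η_pull, η_cpow]

variable {O₁ : StableOrientation T₁} {O₂ : StableOrientation T₂}

lemma η_gysinOne (hτ : τ.PreservesOrientation O₁ O₂) {V X : C} (f : V ⟶ X)
    (hc : F.Confined f) (hs : F.Specialized f) :
    τ.η (𝟙 X) (T₁.gysinOne O₁ f hc hs) = T₂.gysinOne O₂ f hc hs := by
  rw [BivariantTheory.gysinOne, τ.η_push,
    τ.η_cast (Category.comp_id f).symm _ (by rw [Category.comp_id]), hτ,
    BivariantTheory.gysinOne]

lemma η_c1L (hτ : τ.PreservesOrientation O₁ O₂) (LBs : LineBundleTheory F) {X : C}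
    (L : LBs.LB X) :
    τ.η (𝟙 X) (T₁.c1L O₁ LBs L) = T₂.c1L O₂ LBs L := by
  rw [BivariantTheory.c1L, BivariantTheory.c1, τ.η_pull, τ.η_gysinOne hτ]
  rfl

end GrothTrans

section Transport

variable {T₁ T₂ : BivariantTheory F} {τ : GrothTrans T₁ T₂} {O₁ : StableOrientation T₁}
  {O₂ : StableOrientation T₂} {LBs : LineBundleTheory F}

lemma SectionAxiom.map (h : SectionAxiom T₁ O₁ LBs) (hτ : τ.PreservesOrientation O₁ O₂) :
    SectionAxiom T₂ O₂ LBs := by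
  intro X L s
  rw [← τ.η_c1L hτ, h X L s, τ.η_gysinOne hτ]

lemma ChernNilpotent.map (h : ChernNilpotent T₁ O₁ LBs) (hτ : τ.PreservesOrientation O₁ O₂) :
    ChernNilpotent T₂ O₂ LBs := by
  intro X L
  obtain ⟨N, hN⟩ := h X L
  exact ⟨N, by rw [← τ.η_c1L hτ, ← τ.η_cpow, hN, τ.η_zero]⟩

/-- The formula for `B₂*` is the image of the one for `B₁*` evaluated at a common nilpotency
order, truncated back to the order `N` at hand. -/
lemma ChernFormula.map {pt : C} {π : ∀ X : C, X ⟶ pt}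
    {sq : ∀ X : C, IsPullback (π X) (𝟙 X) (𝟙 pt) (π X)} {F₁ : ℕ → ℕ → T₁.B (𝟙 pt)}
    (h : ChernFormula T₁ O₁ LBs sq F₁) (hnilp : ChernNilpotent T₁ O₁ LBs)
    (hτ : τ.PreservesOrientation O₁ O₂) :
    ChernFormula T₂ O₂ LBs sq (fun i j => τ.η (𝟙 pt) (F₁ i j)) := by
  intro X L₁ L₂ N h₁ h₂
  obtain ⟨N₁, hN₁⟩ := hnilp X L₁
  obtain ⟨N₂, hN₂⟩ := hnilp X L₂
  set M := max N (max N₁ N₂)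
  have hM₁ : T₁.cpow (T₁.c1L O₁ LBs L₁) M = 0 := T₁.cpow_eq_zero_of_le hN₁ (by omega)
  have hM₂ : T₁.cpow (T₁.c1L O₁ LBs L₂) M = 0 := T₁.cpow_eq_zero_of_le hN₂ (by omega)
  calc T₂.c1L O₂ LBs (LBs.tensor L₁ L₂)
      = τ.η (𝟙 X) (evalPS T₁ sq F₁ (T₁.c1L O₁ LBs L₁) (T₁.c1L O₁ LBs L₂) M) := by
        rw [← h X L₁ L₂ M hM₁ hM₂, τ.η_c1L hτ]
    _ = evalPS T₂ sq _ (T₂.c1L O₂ LBs L₁) (T₂.c1L O₂ LBs L₂) M := by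
        rw [τ.η_evalPS, τ.η_c1L hτ, τ.η_c1L hτ]
    _ = _ := T₂.evalPS_eq_of_le sq _ h₁ h₂ (by omega)

end Transport

/-- `P n m` plays the role of `ℙⁿ × ℙᵐ` with its two tautological bundles: there `xᵃ yᵇ`
vanishes unless `a ≤ n` and `b ≤ m`, and `pushPt` reads off the coefficient of `xⁿ yᵐ`.
Coefficients are therefore determined by induction on the total degree. -/
lemma ChernFormula.unique {T : BivariantTheory F} {O : StableOrientation T}
    {LBs : LineBundleTheory F} {pt : C} {π : ∀ X : C, X ⟶ pt}
    {sq : ∀ X : C, IsPullback (π X) (𝟙 X) (𝟙 pt) (π X)}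
    (P : ℕ → ℕ → C) (O10 O01 : ∀ n m, LBs.LB (P n m))
    (hvan : ∀ n m a b, n < a ∨ m < b →
      T.cprod (T.cpow (T.c1L O LBs (O10 n m)) a) (T.cpow (T.c1L O LBs (O01 n m)) b) = 0)
    (pushPt : ∀ n m, T.B (𝟙 (P n m)) → T.B (𝟙 pt))
    (hextract : ∀ n m c,
      pushPt n m (T.psMonomial sq c (T.c1L O LBs (O10 n m)) (T.c1L O LBs (O01 n m)) n m) = c)
    {G H : ℕ → ℕ → T.B (𝟙 pt)} (hG : ChernFormula T O LBs sq G)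
    (hH : ChernFormula T O LBs sq H) : G = H := by
  funext i j
  induction hk : i + j using Nat.strong_induction_on generalizing i j with
  | _ k ih =>
    subst hk
    set x := T.c1L O LBs (O10 i j)
    set y := T.c1L O LBs (O01 i j)
    set N := max i j + 1
    have hx : T.cpow x N = 0 := by
      simpa only [BivariantTheory.cpow, BivariantTheory.cprod_one] using
        hvan i j N 0 (Or.inl (by omega))
    have hy : T.cpow y N = 0 := by
      simpa only [BivariantTheory.cpow, BivariantTheory.one_cprod] using
        hvan i j 0 N (Or.inr (by omega))
    have hdiff := T.evalPS_sub_evalPS sq (G := G) (H := H) (N := N) (by omega) (by omega)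
      (hvan i j) fun a b hab => ih _ hab a b rfl
    rw [← hG _ _ _ N hx hy, ← hH _ _ _ N hx hy, sub_self, eq_comm, sub_eq_zero] at hdiff
    rw [← hextract i j (G i j), hdiff, hextract]

theorem fgl_transport_along_grothendieck_transformation_general
    {C : Type u} [Category.{v} C] {F : Functoriality C}
    (T₁ T₂ : BivariantTheory F) (O₁ : StableOrientation T₁) (O₂ : StableOrientation T₂)
    (τ : GrothTrans T₁ T₂)
    -- `τ` is orientation preserving:
    (τθ : ∀ (X Y : C) (f : X ⟶ Y) (hf : F.Specialized f),
      τ.η f (O₁.θ f hf) = O₂.θ f hf)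
    {pt : C} (hpt : Limits.IsTerminal pt)
    (sq : ∀ X : C, IsPullback (hpt.from X) (𝟙 X) (𝟙 pt) (hpt.from X))
    (LBs : LineBundleTheory F)
    -- `B₁*` satisfies the section axiom and the formal group law axiom:
    (hsection₁ : SectionAxiom T₁ O₁ LBs)
    (hnilp₁ : ChernNilpotent T₁ O₁ LBs)
    (F₁ : ℕ → ℕ → T₁.B (𝟙 pt))
    
    (hformula₁ : ChernFormula T₁ O₁ LBs sq F₁)
    -- geometric input (products of projective spaces) for `B₂*`, as needed for the
    -- uniqueness of the formal group law of `B₂*`: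
    (P : ℕ → ℕ → C) (O10 O01 : ∀ n m, LBs.LB (P n m))
    (hvan₂ : ∀ n m i j, (n < i ∨ m < j) →
      T₂.cprod (T₂.cpow (T₂.c1L O₂ LBs (O10 n m)) i)
        (T₂.cpow (T₂.c1L O₂ LBs (O01 n m)) j) = 0)
    (pushPt₂ : ∀ n m, T₂.B (𝟙 (P n m)) → T₂.B (𝟙 pt))
    (hextract₂ : ∀ n m (c : T₂.B (𝟙 pt)),
      pushPt₂ n m (T₂.cprod (T₂.pull (sq (P n m)) c)
        (T₂.cprod (T₂.cpow (T₂.c1L O₂ LBs (O10 n m)) n)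
          (T₂.cpow (T₂.c1L O₂ LBs (O01 n m)) m))) = c) :
    -- `B₂*` satisfies the section axiom,
    SectionAxiom T₂ O₂ LBs
    -- `B₂*` satisfies the formal group law axiom, with formal group law `η(F^{B₁})`,
    ∧ ChernNilpotent T₂ O₂ LBs
    ∧ ChernFormula T₂ O₂ LBs sq (fun i j => τ.η (𝟙 pt) (F₁ i j))
    -- and `η(F^{B₁})` is the unique such power series:
    ∧ (∀ G : ℕ → ℕ → T₂.B (𝟙 pt), ChernFormula T₂ O₂ LBs sq G →
        ∀ i j, G i j = τ.η (𝟙 pt) (F₁ i j)) := by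
  have hformula₂ := hformula₁.map hnilp₁ τθ
  exact ⟨hsection₁.map τθ, hnilp₁.map τθ, hformula₂, fun G hG i j =>
    congrFun₂ (ChernFormula.unique P O10 O01 hvan₂ pushPt₂ hextract₂ hG hformula₂) i j⟩

/-- Let `η : B₁* → B₂*` be an orientation preserving Grothendieck
transformation between stably oriented bivariant theories, where `B₁*` satisfies the
section axiom and the formal group law axiom with formal group law `F^{B₁}`.  Then
`B₂*` also satisfies the section and formal group law axioms, its formal group law is
`F^{B₂} = η(F^{B₁})`, and `F^{B₂}` is the unique power series `F` with
`c₁(L₁ ⊗ L₂) = F(c₁(L₁), c₁(L₂))` for all line bundles on all `X`.  (The geometric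
input needed for uniqueness, as in the uniqueness lemma, is recorded as hypotheses
for `B₂*`.) -/
theorem fgl_transport_along_grothendieck_transformation
    {C : Type u} [Category.{v} C] {F : Functoriality C}
    (T₁ T₂ : BivariantTheory F) (O₁ : StableOrientation T₁) (O₂ : StableOrientation T₂)
    (τ : GrothTrans T₁ T₂)
    -- `τ` is orientation preserving:
    (τθ : ∀ (X Y : C) (f : X ⟶ Y) (hf : F.Specialized f),
      τ.η f (O₁.θ f hf) = O₂.θ f hf)
    {pt : C} (hpt : Limits.IsTerminal pt)
    (sq : ∀ X : C, IsPullback (hpt.from X) (𝟙 X) (𝟙 pt) (hpt.from X))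
    (LBs : LineBundleTheory F)
    -- `B₁*` satisfies the section axiom and the formal group law axiom:
    (hsection₁ : SectionAxiom T₁ O₁ LBs)
    (hnilp₁ : ChernNilpotent T₁ O₁ LBs)
    (F₁ : ℕ → ℕ → T₁.B (𝟙 pt))
    
    (hformula₁ : ChernFormula T₁ O₁ LBs sq F₁)
    -- geometric input (products of projective spaces) for `B₂*`, as needed for the
    -- uniqueness of the formal group law of `B₂*`:
    (P : ℕ → ℕ → C) (O10 O01 : ∀ n m, LBs.LB (P n m))
    (hvan₂ : ∀ n m i j, (n < i ∨ m < j) →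
      T₂.cprod (T₂.cpow (T₂.c1L O₂ LBs (O10 n m)) i)
        (T₂.cpow (T₂.c1L O₂ LBs (O01 n m)) j) = 0)
    (pushPt₂ : ∀ n m, T₂.B (𝟙 (P n m)) → T₂.B (𝟙 pt))
    (pushPt₂_add : ∀ n m a b, pushPt₂ n m (a + b) = pushPt₂ n m a + pushPt₂ n m b)
    (hextract₂ : ∀ n m (c : T₂.B (𝟙 pt)),
      pushPt₂ n m (T₂.cprod (T₂.pull (sq (P n m)) c)
        (T₂.cprod (T₂.cpow (T₂.c1L O₂ LBs (O10 n m)) n)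
          (T₂.cpow (T₂.c1L O₂ LBs (O01 n m)) m))) = c) :
    -- `B₂*` satisfies the section axiom,
    SectionAxiom T₂ O₂ LBs
    -- `B₂*` satisfies the formal group law axiom, with formal group law `η(F^{B₁})`,
    ∧ ChernNilpotent T₂ O₂ LBs
    ∧ ChernFormula T₂ O₂ LBs sq (fun i j => τ.η (𝟙 pt) (F₁ i j))
    -- and `η(F^{B₁})` is the unique such power series:
    ∧ (∀ G : ℕ → ℕ → T₂.B (𝟙 pt), ChernFormula T₂ O₂ LBs sq G →
        ∀ i j, G i j = τ.η (𝟙 pt) (F₁ i j)) :=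
  fgl_transport_along_grothendieck_transformation_general T₁ T₂ O₁ O₂ τ τθ hpt sq LBs hsection₁
    hnilp₁ F₁ hformula₁ P O10 O01 hvan₂ pushPt₂ hextract₂
end

section
/- Let B* be an oriented bivariant theory on a functoriality in which smooth morphisms are specialized and whose orientation is strong along smooth morphisms; let f : X → Y be quasi-smooth admitting two factorizations X ↪ P₁ → Y and X ↪ P₂ → Y through closed immersions iⱼ followed by smooth projections pⱼ. If Gysin pullbacks along quasi-smooth immersions commute with smooth pullbacks and are functorial for compositions of immersions, then i₁^vir ∘ p₁^! = i₂^vir ∘ p₂^!; i.e., the virtual pullback f^vir is independent of the chosen factorization. -/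
open CategoryTheory CategoryTheory.Limits

/-- Let `B*` be an oriented homology/bivariant setting in which
smooth morphisms have (strong) pullbacks `spull` and quasi-smooth immersions have
virtual (Gysin) pullbacks `virt`.  Let `f : X ⟶ Y` be quasi-smooth, with two
factorizations `X ↪ P₁ → Y` and `X ↪ P₂ → Y` through closed immersions `iⱼ` followed
by smooth morphisms `pⱼ`.  If virtual pullbacks along quasi-smooth immersions commute
with smooth pullbacks in Cartesian squares, are functorial for compositions of
immersions, and pull back trivially along sections of smooth morphisms, then
`i₁^vir ∘ p₁^! = i₂^vir ∘ p₂^!`: the virtual pullback `f^vir` is independent of the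
chosen factorization. -/
theorem virtual_pullback_well_defined
    {C : Type*} [Category C] [HasPullbacks C]
    (Smooth QSImm : MorphismProperty C)
    -- closure properties of the two classes:
    (hSm_comp : ∀ {X Y Z : C} {f : X ⟶ Y} {g : Y ⟶ Z},
      Smooth f → Smooth g → Smooth (f ≫ g))
    (hSm_pull : ∀ {P X Q Y : C} {l : P ⟶ X} {t : P ⟶ Q} {b : X ⟶ Y} {r : Q ⟶ Y},
      IsPullback l t b r → Smooth b → Smooth t)
    (hQS_comp : ∀ {X Y Z : C} {f : X ⟶ Y} {g : Y ⟶ Z},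
      QSImm f → QSImm g → QSImm (f ≫ g))
    (hQS_pull : ∀ {P X Q Y : C} {l : P ⟶ X} {t : P ⟶ Q} {b : X ⟶ Y} {r : Q ⟶ Y},
      IsPullback l t b r → QSImm b → QSImm t)
    -- sections of smooth morphisms are quasi-smooth immersions (graph construction):
    (hgraph : ∀ {X Y : C} (s : X ⟶ Y) (p : Y ⟶ X),
      Smooth p → s ≫ p = 𝟙 X → QSImm s)
    -- the homology theory with its two kinds of pullbacks:
    (H : C → Type)
    (spull : ∀ {X Y : C} (f : X ⟶ Y), Smooth f → (H Y → H X))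
    (virt : ∀ {X Y : C} (i : X ⟶ Y), QSImm i → (H Y → H X))
    -- (a) smooth pullbacks are functorial:
    (spull_comp : ∀ {X Y Z : C} (f : X ⟶ Y) (g : Y ⟶ Z) (hf : Smooth f)
      (hg : Smooth g), spull (f ≫ g) (hSm_comp hf hg) = spull f hf ∘ spull g hg)
    -- (d) virtual pullbacks are functorial along composable immersions:
    (virt_comp : ∀ {X Y Z : C} (i : X ⟶ Y) (j : Y ⟶ Z) (hi : QSImm i)
      (hj : QSImm j), virt (i ≫ j) (hQS_comp hi hj) = virt i hi ∘ virt j hj)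
    -- (b) virtual pullbacks along immersions commute with smooth pullbacks in
    -- Cartesian squares:
    (hcommute : ∀ {P X Q Y : C} {l : P ⟶ X} {t : P ⟶ Q} {b : X ⟶ Y} {r : Q ⟶ Y}
      (sq : IsPullback l t b r) (hb : QSImm b) (hr : Smooth r),
      virt t (hQS_pull sq hb) ∘ spull r hr = spull l (hSm_pull sq.flip hr) ∘ virt b hb)
    -- (c) for a section `s` of a smooth morphism `p`, `s^vir` inverts `p^!`:
    (hsec : ∀ {X Y : C} (s : X ⟶ Y) (p : Y ⟶ X) (hp : Smooth p)
      (hsp : s ≫ p = 𝟙 X), virt s (hgraph s p hp hsp) ∘ spull p hp = id)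
    -- the quasi-smooth morphism `f` with its two factorizations:
    {X Y P₁ P₂ : C} (f : X ⟶ Y)
    (i₁ : X ⟶ P₁) (p₁ : P₁ ⟶ Y) (hi₁ : QSImm i₁) (hp₁ : Smooth p₁)
    (hf₁ : i₁ ≫ p₁ = f)
    (i₂ : X ⟶ P₂) (p₂ : P₂ ⟶ Y) (hi₂ : QSImm i₂) (hp₂ : Smooth p₂)
    (hf₂ : i₂ ≫ p₂ = f) :
    virt i₁ hi₁ ∘ spull p₁ hp₁ = virt i₂ hi₂ ∘ spull p₂ hp₂ := by
  -- Key step: if `δ ≫ q = i` with `q` smooth and `i` a quasi-smooth immersion,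
  -- then `δ` is a quasi-smooth immersion and `virt δ ∘ spull q = virt i`.
  have hvirt : ∀ {A B : C} (g g' : A ⟶ B) (hgg : g = g') (hg : QSImm g)
      (hg' : QSImm g'), virt g hg = virt g' hg' := by
    intro A B g g' hgg hg hg'; subst hgg; rfl
  have key : ∀ {P : C} (q : P ⟶ P₁) (hq : Smooth q) (δ : X ⟶ P)
      (h : δ ≫ q = i₁), ∃ hδ : QSImm δ, virt δ hδ ∘ spull q hq = virt i₁ hi₁ := by
    intro P q hq δ h
    -- form X' = X ×_{P₁} P
    let sq : IsPullback (pullback.fst i₁ q) (pullback.snd i₁ q) i₁ q :=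
      IsPullback.of_hasPullback i₁ q
    have ht : QSImm (pullback.snd i₁ q) := hQS_pull sq hi₁
    have hp' : Smooth (pullback.fst i₁ q) := hSm_pull sq.flip hq
    -- the section `s : X ⟶ X'`
    let s : X ⟶ pullback i₁ q := pullback.lift (𝟙 X) δ (by simpa using h.symm)
    have hsf : s ≫ pullback.fst i₁ q = 𝟙 X := pullback.lift_fst _ _ _
    have hss : s ≫ pullback.snd i₁ q = δ := pullback.lift_snd _ _ _
    have hs : QSImm s := hgraph s (pullback.fst i₁ q) hp' hsf
    have hδ : QSImm δ := hss ▸ hQS_comp hs ht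
    refine ⟨hδ, ?_⟩
    have h1 : virt δ hδ = virt s hs ∘ virt (pullback.snd i₁ q) ht :=
      (hvirt δ (s ≫ pullback.snd i₁ q) hss.symm hδ (hQS_comp hs ht)).trans
        (virt_comp s (pullback.snd i₁ q) hs ht)
    rw [h1, Function.comp_assoc, hcommute sq hi₁ hq, ← Function.comp_assoc,
      hsec s (pullback.fst i₁ q) hp' hsf]
    rfl
  -- apply it to the two projections of P₁ ×_Y P₂ and the diagonal
  let Pc := pullback p₁ p₂
  let q₁ : Pc ⟶ P₁ := pullback.fst p₁ p₂
  let q₂ : Pc ⟶ P₂ := pullback.snd p₁ p₂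
  have sqc : IsPullback q₁ q₂ p₁ p₂ := IsPullback.of_hasPullback p₁ p₂
  have hq₁ : Smooth q₁ := hSm_pull sqc.flip hp₂
  have hq₂ : Smooth q₂ := hSm_pull sqc hp₁
  let δ : X ⟶ Pc := pullback.lift i₁ i₂ (by rw [hf₁, hf₂])
  have hδ1 : δ ≫ q₁ = i₁ := pullback.lift_fst _ _ _
  obtain ⟨hδ, e₁⟩ := key q₁ hq₁ δ hδ1
  -- the analogous statement for the second factorization
  have key₂ : virt δ hδ ∘ spull q₂ hq₂ = virt i₂ hi₂ := by
    have hδ2 : δ ≫ q₂ = i₂ := pullback.lift_snd _ _ _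
    let sq : IsPullback (pullback.fst i₂ q₂) (pullback.snd i₂ q₂) i₂ q₂ :=
      IsPullback.of_hasPullback i₂ q₂
    have ht : QSImm (pullback.snd i₂ q₂) := hQS_pull sq hi₂
    have hp' : Smooth (pullback.fst i₂ q₂) := hSm_pull sq.flip hq₂
    let s : X ⟶ pullback i₂ q₂ := pullback.lift (𝟙 X) δ (by simpa using hδ2.symm)
    have hsf : s ≫ pullback.fst i₂ q₂ = 𝟙 X := pullback.lift_fst _ _ _
    have hss : s ≫ pullback.snd i₂ q₂ = δ := pullback.lift_snd _ _ _
    have hs : QSImm s := hgraph s (pullback.fst i₂ q₂) hp' hsf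
    have h1 : virt δ hδ = virt s hs ∘ virt (pullback.snd i₂ q₂) ht :=
      (hvirt δ (s ≫ pullback.snd i₂ q₂) hss.symm hδ (hQS_comp hs ht)).trans
        (virt_comp s (pullback.snd i₂ q₂) hs ht)
    rw [h1, Function.comp_assoc, hcommute sq hi₂ hq₂, ← Function.comp_assoc,
      hsec s (pullback.fst i₂ q₂) hp' hsf]
    rfl
  rw [← e₁, ← key₂, Function.comp_assoc, Function.comp_assoc,
    ← spull_comp q₁ p₁ hq₁ hp₁, ← spull_comp q₂ p₂ hq₂ hp₂]
  have hspull : ∀ {A B : C} (g g' : A ⟶ B) (hgg : g = g') (hg : Smooth g)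
      (hg' : Smooth g'), spull g hg = spull g' hg' := by
    intro A B g g' hgg hg hg'; subst hgg; rfl
  rw [hspull (q₁ ≫ p₁) (q₂ ≫ p₂) pullback.condition]
end
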